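/- arXiv:1901.03689 — 4 statements merged into one kernel-verified Lean document; each statement's English description precedes it below -/
import Mathlib

section
/- Let G be a finite simple connected undirected graph with n vertices and m edges, let r be any vertex of G, and let T be any DFS tree of G rooted at r. If h denotes the height of T, then m ≤ n·h (equivalently, h ≥ m/n). -/
namespace StreamDFS

/-- `u` is an ancestor of `v` in the tree `T` rooted at `r`:
`u` lies on (every) path in `T` from `r` to `v`. -/
def IsAncestor {V : Type*} (T : SimpleGraph V) (r u v : V) : Prop :=
  ∀ p : T.Walk r v, p.IsPath → u ∈ p.support

/-- `u` and `v` are comparable in the tree `T` rooted at `r`: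
one is an ancestor of the other. -/
def Cmp {V : Type*} (T : SimpleGraph V) (r u v : V) : Prop :=
  IsAncestor T r u v ∨ IsAncestor T r v u

/-- The depth (level) of `v` in the tree `T` rooted at `r`. -/
noncomputable def depth {V : Type*} (T : SimpleGraph V) (r v : V) : ℕ := T.dist r v

/-- **Min-Height Property** (Lemma 4.1).  For a finite simple connected graph `G`
with `n` vertices and `m` edges, any DFS tree `T` of `G` rooted at any vertex `r`
has height `h` satisfying `m ≤ n·h`. -/
theorem min_height_property {V : Type*} [Fintype V]
    (G T : SimpleGraph V) (r : V)
    (hG : G.Connected) (hTG : T ≤ G) (hTree : T.IsTree)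
    (hDFS : ∀ u v, G.Adj u v → Cmp T r u v) :
    G.edgeSet.ncard ≤ Fintype.card V * Finset.univ.sup (fun v => depth T r v) := by
  classical
  set h := Finset.univ.sup (fun v => depth T r v) with hh
  -- choose a geodesic path from r to each vertex
  have hex : ∀ v : V, ∃ p : T.Walk r v, p.IsPath ∧ p.length = T.dist r v :=
    fun v => hTree.isConnected.exists_path_of_dist r v
  choose p hp hlen using hex
  -- proper-ancestor finsets
  set A : V → Finset V := fun v => ((p v).support.toFinset.erase v) with hA
  have hAcard : ∀ v, (A v).card ≤ h := by
    intro v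
    have hv : v ∈ (p v).support.toFinset := by
      simp [SimpleGraph.Walk.end_mem_support]
    have h1 : (A v).card + 1 = (p v).support.toFinset.card :=
      Finset.card_erase_add_one hv
    have h2 : (p v).support.toFinset.card ≤ (p v).support.length :=
      (p v).support.toFinset_card_le
    have h3 : (p v).support.length = T.dist r v + 1 := by
      rw [SimpleGraph.Walk.length_support, hlen]
    have : (A v).card ≤ T.dist r v := by omega
    exact this.trans (Finset.le_sup (f := fun v => depth T r v) (Finset.mem_univ v))
  -- the orientation map
  set F : Sym2 V → V × V := fun e =>
    if IsAncestor T r e.out.1 e.out.2 then (e.out.2, e.out.1) else (e.out.1, e.out.2)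
    with hF
  have hFe : ∀ e : Sym2 V, s((F e).1, (F e).2) = e := by
    intro e
    by_cases hc : IsAncestor T r e.out.1 e.out.2 <;>
      simp only [hF, hc, if_true, if_false] <;>
      first
        | rw [Sym2.eq_swap]; exact e.out_eq
        | exact e.out_eq
  have hinj : Set.InjOn F G.edgeFinset := by
    intro e1 _ e2 _ heq
    rw [← hFe e1, ← hFe e2, heq]
  -- each edge maps into the ancestor sets
  have hsub : G.edgeFinset.image F ⊆
      Finset.univ.biUnion (fun v => (A v).image (fun u => (v, u))) := by
    intro x hx
    rw [Finset.mem_image] at hx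
    obtain ⟨e, he, rfl⟩ := hx
    have hadj : G.Adj e.out.1 e.out.2 := by
      rw [← SimpleGraph.mem_edgeSet, Sym2.mk, e.out_eq]
      exact (SimpleGraph.mem_edgeFinset.mp he)
    have hne : e.out.1 ≠ e.out.2 := hadj.ne
    rcases hDFS _ _ hadj with hca | hca
    · have h12 : IsAncestor T r e.out.1 e.out.2 := hca
      have hmem : e.out.1 ∈ A e.out.2 := by
        rw [hA]
        exact Finset.mem_erase.mpr ⟨hne, by
          simp only [List.mem_toFinset]
          exact h12 (p e.out.2) (hp e.out.2)⟩
      simp only [hF, h12, if_true]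
      exact Finset.mem_biUnion.mpr ⟨e.out.2, Finset.mem_univ _,
        Finset.mem_image.mpr ⟨e.out.1, hmem, rfl⟩⟩
    · by_cases h12 : IsAncestor T r e.out.1 e.out.2
      · have hmem : e.out.1 ∈ A e.out.2 := by
          rw [hA]
          exact Finset.mem_erase.mpr ⟨hne, by
            simp only [List.mem_toFinset]
            exact h12 (p e.out.2) (hp e.out.2)⟩
        simp only [hF, h12, if_true]
        exact Finset.mem_biUnion.mpr ⟨e.out.2, Finset.mem_univ _,
          Finset.mem_image.mpr ⟨e.out.1, hmem, rfl⟩⟩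
      · have hmem : e.out.2 ∈ A e.out.1 := by
          rw [hA]
          exact Finset.mem_erase.mpr ⟨hne.symm, by
            simp only [List.mem_toFinset]
            exact hca (p e.out.1) (hp e.out.1)⟩
        simp only [hF, h12, if_false]
        exact Finset.mem_biUnion.mpr ⟨e.out.1, Finset.mem_univ _,
          Finset.mem_image.mpr ⟨e.out.2, hmem, rfl⟩⟩
  -- count
  have hcount : G.edgeFinset.card ≤ Fintype.card V * h := by
    calc G.edgeFinset.card = (G.edgeFinset.image F).card :=
          (Finset.card_image_of_injOn hinj).symm
      _ ≤ (Finset.univ.biUnion (fun v => (A v).image (fun u => (v, u)))).card :=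
          Finset.card_le_card hsub
      _ ≤ ∑ v, ((A v).image (fun u => (v, u))).card := Finset.card_biUnion_le
      _ ≤ ∑ _v : V, h := by
          apply Finset.sum_le_sum
          intro v _
          exact (Finset.card_image_le).trans (hAcard v)
      _ = Fintype.card V * h := by
          simp [Finset.sum_const, Finset.card_univ, Nat.mul_comm]
  rwa [Set.ncard_eq_toFinset_card', ← SimpleGraph.edgeFinset]
end StreamDFS
end

section
/- Let H be a finite simple graph, let k ≥ 1 be an integer, and let T be a spanning tree of H rooted at a vertex r. Write T' for the set of vertices of depth at most k−1 in T. Assume: (i) every edge of H that is not a tree edge of T has at least one endpoint in T'; (ii) every non-tree edge of H with both endpoints in T' joins two vertices comparable in T; (iii) for every subtree τ of T rooted at a vertex of depth k, every edge of H with exactly one endpoint in τ joins two vertices comparable in T. Then every edge of H joins two vertices comparable in T; that is, T is a DFS tree of H. -/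
namespace StreamDFS

/-- Paths in a tree are unique. -/
lemma tree_path_unique {V : Type*} {T : SimpleGraph V} (hT : T.IsTree) {u v : V}
    (p q : T.Walk u v) (hp : p.IsPath) (hq : q.IsPath) : p = q := by
  have := hT.IsAcyclic.path_unique ⟨p, hp⟩ ⟨q, hq⟩
  exact congrArg Subtype.val this

/-- Membership in one path implies ancestry (in a tree). -/
lemma ancestor_of_mem {V : Type*} {T : SimpleGraph V} (hT : T.IsTree) {r v x : V}
    (p : T.Walk r v) (hp : p.IsPath) (hx : x ∈ p.support) : IsAncestor T r x v := by
  intro q hq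
  rw [tree_path_unique hT q p hq hp]
  exact hx

lemma depth_le_of_ancestor {V : Type*} {T : SimpleGraph V} (hT : T.IsTree) {r x u : V}
    (h : IsAncestor T r x u) : depth T r x ≤ depth T r u := by
  classical
  obtain ⟨p, hp, hl⟩ := hT.isConnected.exists_path_of_dist r u
  have hx : x ∈ p.support := h p hp
  calc T.dist r x ≤ (p.takeUntil x hx).length := SimpleGraph.dist_le _
    _ ≤ p.length := SimpleGraph.Walk.length_takeUntil_le p hx
    _ = T.dist r u := hl

/-- Split a walk at position `n`. -/
lemma walk_split {V : Type*} {T : SimpleGraph V} {a b : V} (p : T.Walk a b) (n : ℕ)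
    (hn : n ≤ p.length) :
    ∃ (c : V) (q : T.Walk a c) (q' : T.Walk c b),
      q.length = n ∧ q'.length + n = p.length ∧ q.append q' = p := by
  induction n generalizing a p with
  | zero => exact ⟨a, SimpleGraph.Walk.nil, p, by simp, by simp, by simp⟩
  | succ m ih =>
    cases p with
    | nil => simp at hn
    | cons h p' =>
      obtain ⟨c, q, q', h1, h2, h3⟩ := ih p' (by simpa using hn)
      exact ⟨c, SimpleGraph.Walk.cons h q, q', by simp [h1], by simp only [SimpleGraph.Walk.length_cons]; omega, by simp [h3]⟩

/-- On the path to a vertex of depth ≥ k there is an ancestor of depth exactly k. -/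
lemma exists_ancestor_of_depth {V : Type*} {T : SimpleGraph V} (hT : T.IsTree) {r v : V}
    {k : ℕ} (hk : k ≤ depth T r v) :
    ∃ x, depth T r x = k ∧ IsAncestor T r x v := by
  obtain ⟨p, hp, hl⟩ := hT.isConnected.exists_path_of_dist r v
  obtain ⟨c, q, q', h1, h2, h3⟩ := walk_split p k (by rw [hl]; exact hk)
  refine ⟨c, ?_, ancestor_of_mem hT p hp ?_⟩
  · have hle : T.dist r c ≤ k := h1 ▸ SimpleGraph.dist_le q
    have hle' : T.dist c v ≤ p.length - k := by
      have := SimpleGraph.dist_le q'; omega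
    have htri : T.dist r v ≤ T.dist r c + T.dist c v :=
      hT.isConnected.dist_triangle
    have : k ≤ T.dist r c := by
      have hpl : p.length = T.dist r v := hl
      omega
    exact le_antisymm hle this
  · rw [← h3]
    simp [SimpleGraph.Walk.mem_support_append_iff]

/-- **Lemma 5.1** (`T_C` is a valid DFS tree of `H_C`).  Let `T` be a spanning tree of `H`
rooted at `r`, and let `T'` be the set of vertices of depth at most `k−1`.  If
(i) every non-tree edge of `H` has an endpoint in `T'`,
(ii) every non-tree edge of `H` with both endpoints in `T'` joins comparable vertices, and
(iii) for every subtree `τ` of `T` rooted at a vertex of depth `k`, every edge of `H` with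
exactly one endpoint in `τ` joins comparable vertices,
then every edge of `H` joins two vertices comparable in `T`, i.e. `T` is a DFS tree of `H`. -/
theorem dfs_tree_of_invariants {V : Type*} [Fintype V]
    (H T : SimpleGraph V) (r : V) (k : ℕ) (hk : 1 ≤ k)
    (hTH : T ≤ H) (hTree : T.IsTree)
    (hIH : ∀ u v, H.Adj u v → ¬ T.Adj u v →
      depth T r u ≤ k - 1 ∨ depth T r v ≤ k - 1)
    (hIT1 : ∀ u v, H.Adj u v → ¬ T.Adj u v →
      depth T r u ≤ k - 1 → depth T r v ≤ k - 1 → Cmp T r u v)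
    (hIT2 : ∀ x, depth T r x = k → ∀ u v, H.Adj u v →
      IsAncestor T r x u → ¬ IsAncestor T r x v → Cmp T r u v) :
    ∀ u v, H.Adj u v → Cmp T r u v := by
  -- main helper: handle the case where one endpoint is shallow and the other deep
  have main : ∀ u v, H.Adj u v → depth T r u ≤ k - 1 → ¬ depth T r v ≤ k - 1 →
      Cmp T r u v := by
    intro u v huv hu hv
    have hkv : k ≤ depth T r v := by omega
    obtain ⟨x, hx, hxv⟩ := exists_ancestor_of_depth hTree hkv
    have hxu : ¬ IsAncestor T r x u := by
      intro h
      have := depth_le_of_ancestor hTree h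
      omega
    have := hIT2 x hx v u huv.symm hxv hxu
    exact this.symm
  intro u v huv
  by_cases htv : T.Adj u v
  · -- tree edge: adjacent vertices in a tree are comparable
    obtain ⟨p, hp, _⟩ := hTree.isConnected.exists_path_of_dist r u
    by_cases hv : v ∈ p.support
    · exact Or.inr (ancestor_of_mem hTree p hp hv)
    · -- extend p by the edge u-v to get a path from r to v containing u
      have hrev : v ∉ p.reverse.support := by
        simpa [SimpleGraph.Walk.support_reverse] using hv
      have hq : (SimpleGraph.Walk.cons htv.symm p.reverse).IsPath :=
        hp.reverse.cons hrev
      refine Or.inl (ancestor_of_mem hTree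
        (SimpleGraph.Walk.cons htv.symm p.reverse).reverse hq.reverse ?_)
      simp [SimpleGraph.Walk.support_reverse]
  · rcases hIH u v huv htv with h | h
    · by_cases h2 : depth T r v ≤ k - 1
      · exact hIT1 u v huv htv h h2
      · exact main u v huv h h2
    · by_cases h2 : depth T r u ≤ k - 1
      · exact hIT1 u v huv htv h2 h
      · exact (main v u huv.symm h h2).symm

end StreamDFS
end

section
/- Let G be a finite simple connected graph on vertex set V, let T be a spanning tree of G rooted at a vertex r, and let k ≥ 1 be an integer. Let U denote the set of vertices of depth at most k−1 in T, and assume that for every subtree τ of T rooted at a vertex of depth k, every edge of G with exactly one endpoint in τ joins two vertices comparable in T. Then the connected components of the induced subgraph G[V∖U] are exactly the vertex sets of the subtrees of T rooted at the vertices of depth k; in particular, each such subtree is a spanning tree of the corresponding component. -/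
/-!
In a tree `x` is an ancestor of `v` exactly when `d(r, x) + d(x, v) = d(r, v)`, which turns
reasoning about ancestors into triangle-inequality arithmetic; in particular the ancestors of a
vertex are pairwise comparable. The descendants of a depth-`k` vertex `x` span a connected subtree
lying below level `k - 1`. Conversely, an edge of `G[V ∖ U]` leaving that subtree at an end `u`
would, by `I_{T2}`, end at an ancestor of `u` that is not below `x`, hence an ancestor of `x` of
depth at least `k`, i.e. `x` itself; so no walk of `G[V ∖ U]` leaves the subtree.
-/

namespace StreamDFS

/-- The top `k` levels of the tree `T` rooted at `r`: vertices of depth at most `k-1`. -/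
noncomputable def topLevels {V : Type*} (T : SimpleGraph V) (r : V) (k : ℕ) : Set V :=
  {v | depth T r v ≤ k - 1}

open SimpleGraph

section

variable {V : Type*}

def Between (G : SimpleGraph V) (a x b : V) : Prop :=
  G.dist a x + G.dist x b = G.dist a b

namespace Between

variable {G : SimpleGraph V} {a b x y : V}

theorem shrink_right (hG : G.Connected) (h₁ : Between G a x b) (h₂ : Between G x y b) :
    Between G a x y := by
  have := hG.dist_triangle (u := a) (v := x) (w := y)
  have := hG.dist_triangle (u := a) (v := y) (w := b)
  unfold Between at *
  omega

theorem extend_right (hG : G.Connected) (h₁ : Between G a x y) (h₂ : Between G a y b) :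
    Between G a x b := by
  have := hG.dist_triangle (u := x) (v := y) (w := b)
  have := hG.dist_triangle (u := a) (v := x) (w := b)
  unfold Between at *
  omega

end Between

section Tree

variable {T G : SimpleGraph V} {r u v w x y : V}

theorem _root_.SimpleGraph.IsAcyclic.length_eq_dist (hT : T.IsAcyclic) {p : T.Walk u v}
    (hp : p.IsPath) : p.length = T.dist u v := by
  obtain ⟨q, hq, hq_len⟩ := p.reachable.exists_path_of_dist
  have : p = q := congrArg Subtype.val ((hT.subsingleton_path u v).elim ⟨p, hp⟩ ⟨q, hq⟩)
  rw [this, hq_len]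

theorem _root_.SimpleGraph.IsAcyclic.between_of_mem_support (hT : T.IsAcyclic)
    {p : T.Walk u v} (hp : p.IsPath) (hx : x ∈ p.support) : Between T u x v := by
  classical
  have h_len := congrArg Walk.length (p.take_spec hx)
  rw [Walk.length_append, hT.length_eq_dist (hp.takeUntil hx),
    hT.length_eq_dist (hp.dropUntil hx), hT.length_eq_dist hp] at h_len
  exact h_len

theorem isAncestor_iff_between (hT : T.IsTree) : IsAncestor T r x v ↔ Between T r x v := by
  refine ⟨fun h => ?_, fun h p hp => ?_⟩
  · obtain ⟨p, hp, -⟩ := hT.existsUnique_path r v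
    exact hT.isAcyclic.between_of_mem_support hp (h p hp)
  · obtain ⟨q₁, hq₁⟩ := hT.connected.exists_walk_length_eq_dist r x
    obtain ⟨q₂, hq₂⟩ := hT.connected.exists_walk_length_eq_dist x v
    have h_len : (q₁.append q₂).length = T.dist r v := by
      rw [Walk.length_append, hq₁, hq₂, h]
    rw [(hT.existsUnique_path r v).unique hp ((q₁.append q₂).isPath_of_length_eq_dist h_len),
      Walk.mem_support_append_iff]
    exact Or.inl q₁.end_mem_support

theorem isAncestor_refl (T : SimpleGraph V) (r x : V) : IsAncestor T r x x :=
  fun p _ => p.end_mem_support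

theorem IsAncestor.trans (hT : T.IsTree) (h₁ : IsAncestor T r x w) (h₂ : IsAncestor T r w v) :
    IsAncestor T r x v := by
  rw [isAncestor_iff_between hT] at *
  exact h₁.extend_right hT.connected h₂

theorem IsAncestor.dist_le (hT : T.IsTree) (h : IsAncestor T r x v) :
    T.dist r x ≤ T.dist r v := by
  rw [isAncestor_iff_between hT, Between] at h
  omega

theorem IsAncestor.eq_of_dist_le (hT : T.IsTree) (h : IsAncestor T r x v)
    (hd : T.dist r v ≤ T.dist r x) : x = v := by
  rw [isAncestor_iff_between hT, Between] at h
  exact hT.connected.dist_eq_zero_iff.mp (by omega)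

theorem cmp_of_isAncestor (hT : T.IsTree) (hx : IsAncestor T r x v) (hy : IsAncestor T r y v) :
    Cmp T r x y := by
  classical
  obtain ⟨p, hp, -⟩ := hT.existsUnique_path r v
  have hyp := hy p hp
  rcases (Walk.mem_support_append_iff _ _).mp ((p.take_spec hyp).symm ▸ hx p hp) with h | h
  · left
    exact (isAncestor_iff_between hT).mpr (hT.isAcyclic.between_of_mem_support (hp.takeUntil hyp) h)
  · right
    rw [isAncestor_iff_between hT] at hy ⊢
    exact hy.shrink_right hT.connected
      (hT.isAcyclic.between_of_mem_support (hp.dropUntil hyp) h)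

theorem exists_isAncestor_dist_eq (hT : T.IsTree) {k : ℕ} (hk : k ≤ T.dist r v) :
    ∃ x, T.dist r x = k ∧ IsAncestor T r x v := by
  obtain ⟨p, hp⟩ := hT.connected.exists_walk_length_eq_dist r v
  have h_take := T.dist_le (p.take k)
  have h_drop := T.dist_le (p.drop k)
  have := hT.connected.dist_triangle (u := r) (v := p.getVert k) (w := v)
  rw [Walk.take_length] at h_take
  rw [Walk.drop_length] at h_drop
  refine ⟨p.getVert k, by omega, (isAncestor_iff_between hT).mpr ?_⟩
  unfold Between
  omega

theorem connected_induce_descendants (hT : T.IsTree) (r x : V) :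
    (T.induce {v | IsAncestor T r x v}).Connected := by
  rw [connected_iff_exists_forall_reachable]
  refine ⟨⟨x, isAncestor_refl T r x⟩, fun ⟨w, hw⟩ => ?_⟩
  obtain ⟨p, hp, -⟩ := hT.existsUnique_path x w
  have h_desc : ∀ t ∈ p.support, t ∈ {v | IsAncestor T r x v} := fun t ht => by
    rw [Set.mem_ofPred, isAncestor_iff_between hT] at hw ⊢
    exact hw.shrink_right hT.connected (hT.isAcyclic.between_of_mem_support hp ht)
  exact (p.induce _ h_desc).reachable

theorem reachable_induce_of_isAncestor (hT : T.IsTree) (hTG : T ≤ G) {S : Set V}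
    (hS : {v | IsAncestor T r x v} ⊆ S) {u v : S} (hu : IsAncestor T r x u)
    (hv : IsAncestor T r x v) : (G.induce S).Reachable u v :=
  ((connected_induce_descendants hT r x).preconnected ⟨u, hu⟩ ⟨v, hv⟩).map
    (induceHom (Hom.ofLE hTG) hS)

theorem isAncestor_of_adj (hT : T.IsTree)
    (hx : ∀ u v, G.Adj u v → IsAncestor T r x u → ¬ IsAncestor T r x v → Cmp T r u v)
    (huv : G.Adj u v) (hu : IsAncestor T r x u) (hv : T.dist r x ≤ T.dist r v) :
    IsAncestor T r x v := by
  by_contra hxv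
  rcases hx u v huv hu hxv with h | h
  · exact hxv (hu.trans hT h)
  · rcases cmp_of_isAncestor hT hu h with h' | h'
    · exact hxv h'
    · exact hxv (h'.eq_of_dist_le hT hv ▸ isAncestor_refl T r v)

theorem isAncestor_of_reachable_induce (hT : T.IsTree) {S : Set V}
    (hS : ∀ v ∈ S, T.dist r x ≤ T.dist r v)
    (hx : ∀ u v, G.Adj u v → IsAncestor T r x u → ¬ IsAncestor T r x v → Cmp T r u v)
    {u v : S} (h : (G.induce S).Reachable u v) (hu : IsAncestor T r x u) :
    IsAncestor T r x v := by
  by_contra hv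
  obtain ⟨p⟩ := h
  obtain ⟨d, -, hd_fst, hd_snd⟩ := p.exists_boundary_dart {w | IsAncestor T r x w} hu hv
  exact hd_snd (isAncestor_of_adj hT hx d.adj hd_fst (hS _ d.snd.2))

end Tree

theorem notMem_topLevels_iff {T : SimpleGraph V} {r v : V} {k : ℕ} (hk : 1 ≤ k) :
    v ∉ topLevels T r k ↔ k ≤ depth T r v := by
  simp only [topLevels, Set.mem_ofPred]
  omega

end

theorem subtrees_are_components_general {V : Type*}
    (G T : SimpleGraph V) (r : V) (k : ℕ) (hk : 1 ≤ k)
    (hTG : T ≤ G) (hTree : T.IsTree)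
    (hIT2 : ∀ x, depth T r x = k → ∀ u v, G.Adj u v →
      IsAncestor T r x u → ¬ IsAncestor T r x v → Cmp T r u v) :
    (∀ u v (hu : u ∉ topLevels T r k) (hv : v ∉ topLevels T r k),
      (G.induce (topLevels T r k)ᶜ).Reachable ⟨u, hu⟩ ⟨v, hv⟩ ↔
        ∃ x, depth T r x = k ∧ IsAncestor T r x u ∧ IsAncestor T r x v)
    ∧ (∀ x, depth T r x = k →
        (∀ v, IsAncestor T r x v → v ∉ topLevels T r k) ∧
        (T.induce {v | IsAncestor T r x v}).Connected) := by
  have h_desc : ∀ x, depth T r x = k → ∀ v, IsAncestor T r x v → v ∉ topLevels T r k :=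
    fun x hx v hv => (notMem_topLevels_iff hk).mpr (hx ▸ hv.dist_le hTree)
  refine ⟨fun u v hu hv => ⟨fun h => ?_, ?_⟩,
    fun x hx => ⟨h_desc x hx, connected_induce_descendants hTree r x⟩⟩
  · obtain ⟨x, hx, hxu⟩ := exists_isAncestor_dist_eq hTree ((notMem_topLevels_iff hk).mp hu)
    refine ⟨x, hx, hxu, isAncestor_of_reachable_induce hTree (fun w hw => ?_) (hIT2 x hx) h hxu⟩
    exact hx ▸ (notMem_topLevels_iff hk).mp hw
  · rintro ⟨x, hx, hxu, hxv⟩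
    exact reachable_induce_of_isAncestor hTree hTG (h_desc x hx) hxu hxv

/-- The 'additional property' of the special spanning tree (Section 5).  If `T` is a
spanning tree of the connected graph `G` rooted at `r`, `U` its top `k` levels, and
every edge of `G` with exactly one endpoint in a subtree rooted at a depth-`k` vertex
joins comparable vertices (invariant `I_{T2}`), then the connected components of
`G[V∖U]` are exactly the vertex sets of the subtrees of `T` rooted at depth-`k`
vertices; each such subtree is a spanning tree of its component. -/
theorem subtrees_are_components {V : Type*} [Fintype V]
    (G T : SimpleGraph V) (r : V) (k : ℕ) (hk : 1 ≤ k)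
    (hG : G.Connected) (hTG : T ≤ G) (hTree : T.IsTree)
    (hIT2 : ∀ x, depth T r x = k → ∀ u v, G.Adj u v →
      IsAncestor T r x u → ¬ IsAncestor T r x v → Cmp T r u v) :
    (∀ u v (hu : u ∉ topLevels T r k) (hv : v ∉ topLevels T r k),
      (G.induce (topLevels T r k)ᶜ).Reachable ⟨u, hu⟩ ⟨v, hv⟩ ↔
        ∃ x, depth T r x = k ∧ IsAncestor T r x u ∧ IsAncestor T r x v)
    ∧ (∀ x, depth T r x = k →
        (∀ v, IsAncestor T r x v → v ∉ topLevels T r k) ∧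
        (T.induce {v | IsAncestor T r x v}).Connected) :=
  subtrees_are_components_general G T r k hk hTG hTree hIT2

end StreamDFS
end

section
/- Let H be a finite simple graph on vertex set V, and let T and T' be spanning trees of H rooted at the same vertex r (so all edges of T and of T' are edges of H). Assume that every edge of H joins two vertices comparable in T' (T' is a DFS tree of H), and that the depth of every vertex in T' is at least its depth in T (monotonic fall). Fix an integer k ≥ 1, let U be the set of vertices of depth at most k−1 in T, and let U' be the set of vertices of depth at most k−1 in T'. Then any two vertices u, v ∉ U that lie in the same connected component of the forest obtained from T by deleting U also lie in the same connected component of the forest obtained from T' by deleting U'. -/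
namespace StreamDFS

/-- In a tree, any path realizes the distance. -/
lemma path_length_eq_dist {V : Type*} {G : SimpleGraph V} (hG : G.IsTree) {u v : V}
    (p : G.Walk u v) (hp : p.IsPath) : p.length = G.dist u v := by
  obtain ⟨q, hq, hql⟩ := hG.isConnected.exists_path_of_dist u v
  rw [← hql]
  exact congr_arg SimpleGraph.Walk.length ((hG.existsUnique_path u v).unique hp hq)

/-- A walk supported inside a set yields reachability in the induced graph. -/
lemma reachable_induce_of_walk {V : Type*} {G : SimpleGraph V} {S : Set V} {a b : V}
    (q : G.Walk a b) (hsupp : ∀ w ∈ q.support, w ∈ S) :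
    ∀ (ha : a ∈ S) (hb : b ∈ S), (G.induce S).Reachable ⟨a, ha⟩ ⟨b, hb⟩ := by
  induction q with
  | nil => exact fun ha hb => SimpleGraph.Reachable.refl _
  | @cons x y z hadj q ih =>
    intro ha hb
    have hy : y ∈ S := hsupp y (by simp)
    have step : (G.induce S).Adj ⟨x, ha⟩ ⟨y, hy⟩ := by
      simpa using hadj
    exact (step.reachable).trans (ih (fun w hw => hsupp w (by simp [hw])) hy hb)

/-- Key claim in Lemma 5.3.  Let `T` and `T'` be spanning trees of a graph `H` rooted
at `r`, where `T'` is a DFS tree of `H` and depths only increase from `T` to `T'`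
(monotonic fall).  With `U` (resp. `U'`) the top `k` levels of `T` (resp. `T'`), any two
vertices outside `U` lying in the same component of the forest `T − U` also lie in the
same component of the forest `T' − U'`. -/
theorem monotonic_fall_same_component {V : Type*} [Fintype V]
    (H T T' : SimpleGraph V) (r : V) (k : ℕ) (hk : 1 ≤ k)
    (hTH : T ≤ H) (hT'H : T' ≤ H) (hTree : T.IsTree) (hTree' : T'.IsTree)
    (hDFS : ∀ u v, H.Adj u v → Cmp T' r u v)
    (hmono : ∀ v, depth T r v ≤ depth T' r v) :
    ∀ u v (hu : u ∉ topLevels T r k) (hv : v ∉ topLevels T r k),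
      (T.induce (topLevels T r k)ᶜ).Reachable ⟨u, hu⟩ ⟨v, hv⟩ →
      ∃ (hu' : u ∉ topLevels T' r k) (hv' : v ∉ topLevels T' r k),
        (T'.induce (topLevels T' r k)ᶜ).Reachable ⟨u, hu'⟩ ⟨v, hv'⟩ := by
  classical
  -- outside U implies outside U'
  have hsub : ∀ w, w ∉ topLevels T r k → w ∉ topLevels T' r k := by
    intro w hw hw'
    exact hw (le_trans (hmono w) hw')
  -- key: deep vertices have T'-depth ≥ k
  have hdeep : ∀ w, w ∉ topLevels T r k → k ≤ T'.dist r w := by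
    intro w hw
    have h1 : ¬ T.dist r w ≤ k - 1 := hw
    have := hmono w
    unfold depth at this
    omega
  -- key edge lemma
  have key : ∀ a b (ha : a ∉ topLevels T r k) (hb : b ∉ topLevels T r k)
      (hab : IsAncestor T' r a b),
      (T'.induce (topLevels T' r k)ᶜ).Reachable ⟨a, hsub a ha⟩ ⟨b, hsub b hb⟩ := by
    intro a b ha hb hanc
    obtain ⟨p, hp, -⟩ := hTree'.existsUnique_path r b
    have hap : a ∈ p.support := hanc p hp
    set q : T'.Walk a b := p.dropUntil a hap with hq
    -- every vertex of q is deep in T'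
    have hsupp : ∀ w ∈ q.support, w ∈ (topLevels T' r k)ᶜ := by
      intro w hw
      have hwq : w ∈ q.support := hw
      -- build a path r → w
      set s : T'.Walk r w := (p.takeUntil a hap).append (q.takeUntil w hwq) with hs
      have hsP : s.IsPath := by
        have : ((s.append (q.dropUntil w hwq))).IsPath := by
          rw [hs, ← SimpleGraph.Walk.append_assoc, q.take_spec hwq, hq, p.take_spec hap]
          exact hp
        exact this.of_append_left
      have hlen : T'.dist r w = s.length := (path_length_eq_dist hTree' s hsP).symm
      have hlenA : T'.dist r a = (p.takeUntil a hap).length :=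
        (path_length_eq_dist hTree' _ (hp.takeUntil hap)).symm
      have hka : k ≤ T'.dist r a := (hdeep a ha).trans_eq (by rfl)
      have : k ≤ T'.dist r w := by
        rw [hlen, hs, SimpleGraph.Walk.length_append]
        omega
      intro hmem
      have h2 : T'.dist r w ≤ k - 1 := hmem
      omega
    exact reachable_induce_of_walk q hsupp _ _
  -- edge lemma using Cmp symmetry
  have edge : ∀ a b (ha : a ∉ topLevels T r k) (hb : b ∉ topLevels T r k), T.Adj a b →
      (T'.induce (topLevels T' r k)ᶜ).Reachable ⟨a, hsub a ha⟩ ⟨b, hsub b hb⟩ := by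
    intro a b ha hb hadj
    rcases hDFS a b (hTH hadj) with h | h
    · exact key a b ha hb h
    · exact (key b a hb ha h).symm
  suffices hmain : ∀ (x y : ((topLevels T r k)ᶜ : Set V))
      (w : (T.induce (topLevels T r k)ᶜ).Walk x y),
      (T'.induce (topLevels T' r k)ᶜ).Reachable ⟨x.1, hsub x.1 x.2⟩ ⟨y.1, hsub y.1 y.2⟩ by
    intro u v hu hv hr
    obtain ⟨w⟩ := hr
    exact ⟨hsub u hu, hsub v hv, hmain ⟨u, hu⟩ ⟨v, hv⟩ w⟩
  intro x y w
  induction w with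
  | nil => exact SimpleGraph.Reachable.refl _
  | @cons x y z hadj w ih =>
    have hadj' : T.Adj x.1 y.1 := hadj
    exact (edge x.1 y.1 x.2 y.2 hadj').trans ih
end StreamDFS
end
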